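/- Softmax temporal consistency: if V* is the fixed point of the entropy-regularized Bellman equation and Q*(s,a) = R(s,a) + γ 𝔼_{s'∼P(·|s,a)} V*(s'), then V*(s) = τ log ∑_a exp(Q*(s,a)/τ), and for the softmax policy π*(a|s) = exp(Q*(s,a)/τ)/∑_{a'} exp(Q*(s,a')/τ) one has V*(s) = ∑_a π*(a|s)(Q*(s,a) − τ log π*(a|s)) for every state s. -/
import Mathlib

open BigOperators

/-- Softmax temporal consistency: if `V*` is the fixed point of the
entropy-regularized Bellman equation and `Q*(s,a) = R(s,a) + γ 𝔼_{s'} V*(s')`, then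
`V*(s) = τ log ∑_a exp(Q*(s,a)/τ)`, and for the softmax policy `π*` one has
`V*(s) = ∑_a π*(a|s)(Q*(s,a) − τ log π*(a|s))`. -/
theorem softmax_temporal_consistency
    {S A : Type*} [Fintype S] [Fintype A] [Nonempty S] [Nonempty A]
    (P : S → A → S → ℝ)
    (hP_nonneg : ∀ s a s', 0 ≤ P s a s')
    (hP_sum : ∀ s a, ∑ s', P s a s' = 1)
    (R : S → A → ℝ) (γ : ℝ) (hγ0 : 0 ≤ γ) (hγ1 : γ < 1)
    (τ : ℝ) (hτ : 0 < τ)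
    (Vstar : S → ℝ)
    (hV : ∀ s, Vstar s
        = τ * Real.log (∑ a, Real.exp ((R s a + γ * ∑ s', P s a s' * Vstar s') / τ)))
    (Qstar : S → A → ℝ)
    (hQ : ∀ s a, Qstar s a = R s a + γ * ∑ s', P s a s' * Vstar s')
    (πstar : S → A → ℝ)
    (hπ : ∀ s a, πstar s a
        = Real.exp (Qstar s a / τ) / ∑ a', Real.exp (Qstar s a' / τ)) :
    (∀ s, Vstar s = τ * Real.log (∑ a, Real.exp (Qstar s a / τ))) ∧
    (∀ s, Vstar s = ∑ a, πstar s a * (Qstar s a - τ * Real.log (πstar s a))) := by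
  have h1 : ∀ s, Vstar s = τ * Real.log (∑ a, Real.exp (Qstar s a / τ)) := by
    intro s; rw [hV s]; simp only [hQ]
  refine ⟨h1, fun s => ?_⟩
  set Z : ℝ := ∑ a', Real.exp (Qstar s a' / τ) with hZ
  have hZpos : 0 < Z := Finset.sum_pos (fun a _ => Real.exp_pos _) Finset.univ_nonempty
  have hlogπ : ∀ a, Real.log (πstar s a) = Qstar s a / τ - Real.log Z := by
    intro a
    rw [hπ s a, Real.log_div (Real.exp_ne_zero _) (ne_of_gt hZpos), Real.log_exp]
  have hterm : ∀ a, πstar s a * (Qstar s a - τ * Real.log (πstar s a))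
      = πstar s a * (τ * Real.log Z) := by
    intro a
    rw [hlogπ a]
    field_simp
    try ring
  rw [Finset.sum_congr rfl (fun a _ => hterm a), ← Finset.sum_mul]
  have hsum : ∑ a, πstar s a = 1 := by
    rw [Finset.sum_congr rfl (fun a _ => hπ s a), ← Finset.sum_div]
    exact div_self (ne_of_gt hZpos)
  rw [hsum, one_mul, h1 s]
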